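/- arXiv:2303.16652 — 2 statements merged into one kernel-verified Lean document; each statement's English description precedes it below -/
import Mathlib

section
/- If X is a Hausdorff Baire space admitting a point-finite cover by meager sets that is completely additive with respect to the Baire property, then there exists a co-meager subset B ⊆ X that admits a Kuratowski partition (a partition into sets meager in B such that every subfamily's union has the Baire property in B). -/
def HasBaireProperty {α : Type*} [TopologicalSpace α] (s : Set α) : Prop :=
  ∃ U : Set α, IsOpen U ∧ IsMeagre (symmDiff U s)

def KuratowskiPartition (α : Type*) [TopologicalSpace α] (F : Set (Set α)) : Prop :=
  (∀ s ∈ F, IsMeagre s) ∧ (∀ s ∈ F, s.Nonempty) ∧ F.PairwiseDisjoint id ∧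
    ⋃₀ F = Set.univ ∧ ∀ F' ⊆ F, HasBaireProperty (⋃₀ F')

open Set

section Aux

variable {X : Type*} [TopologicalSpace X]

/-! ### Basic meagre / Baire property lemmas -/

lemma isMeagre_union' {s t : Set X} (hs : IsMeagre s) (ht : IsMeagre t) : IsMeagre (s ∪ t) := by
  rw [IsMeagre, compl_union]
  exact Filter.inter_mem hs ht

lemma not_isMeagre_nonempty {s : Set X} (h : ¬ IsMeagre s) : s.Nonempty := by
  rcases s.eq_empty_or_nonempty with rfl | hne
  · exact absurd IsMeagre.empty h
  · exact hne

/-- If `s` is non-meagre and `m` is meagre then `s \ m` is non-meagre. -/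
lemma not_isMeagre_diff {s m : Set X} (h : ¬ IsMeagre s) (hm : IsMeagre m) :
    ¬ IsMeagre (s \ m) := by
  intro h'
  exact h ((isMeagre_union' h' hm).mono (fun x hx => by
    by_cases hxm : x ∈ m
    · exact Or.inr hxm
    · exact Or.inl ⟨hx, hxm⟩))

lemma not_isMeagre_mono {s t : Set X} (h : ¬ IsMeagre s) (hst : s ⊆ t) : ¬ IsMeagre t :=
  fun ht => h (ht.mono hst)

lemma IsOpen.hasBaireProperty' {U : Set X} (h : IsOpen U) : HasBaireProperty U :=
  ⟨U, h, by rw [symmDiff_self]; exact IsMeagre.empty⟩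

lemma hasBaireProperty_inter {s t : Set X} (hs : HasBaireProperty s) (ht : HasBaireProperty t) :
    HasBaireProperty (s ∩ t) := by
  obtain ⟨U, hUo, hUm⟩ := hs
  obtain ⟨V, hVo, hVm⟩ := ht
  refine ⟨U ∩ V, hUo.inter hVo, (isMeagre_union' hUm hVm).mono ?_⟩
  intro x hx
  rw [mem_symmDiff] at hx
  simp only [mem_union, mem_symmDiff, mem_inter_iff] at hx ⊢
  tauto

/-! ### Disjointly supported unions of nowhere dense / meagre sets -/

lemma isNowhereDense_mono {s t : Set X} (ht : IsNowhereDense t) (hst : s ⊆ t) :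
    IsNowhereDense s := by
  rw [IsNowhereDense] at ht ⊢
  have : interior (closure s) ⊆ interior (closure t) :=
    interior_mono (closure_mono hst)
  rw [ht] at this
  exact eq_empty_of_subset_empty this

lemma IsNowhereDense.isMeagre' {s : Set X} (hs : IsNowhereDense s) : IsMeagre s := by
  rw [isMeagre_iff_countable_union_isNowhereDense]
  exact ⟨{s}, by simpa using hs, countable_singleton s, by simp⟩

/-- closure U \ U is nowhere dense for U open. -/
lemma isNowhereDense_closure_diff {U : Set X} (hU : IsOpen U) :
    IsNowhereDense (closure U \ U) := by
  have hcl : IsClosed (closure U \ U) := isClosed_closure.sdiff hU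
  rw [hcl.isNowhereDense_iff]
  rw [eq_empty_iff_forall_notMem]
  intro x hx
  obtain ⟨O, hOsub, hOo, hxO⟩ := mem_interior.mp hx
  have hxcl : x ∈ closure U := (hOsub hxO).1
  obtain ⟨y, hyO, hyU⟩ :=
    mem_closure_iff.mp hxcl O hOo hxO
  exact (hOsub hyO).2 hyU

/-- A union of nowhere dense sets, each contained in one of a pairwise disjoint
family of open sets, is nowhere dense. -/
lemma isNowhereDense_iUnion_disjoint {ι : Sort*} (V : ι → Set X) (N : ι → Set X)
    (hVo : ∀ i, IsOpen (V i)) (hdisj : ∀ i j, i ≠ j → Disjoint (V i) (V j))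
    (hNV : ∀ i, N i ⊆ V i) (hnwd : ∀ i, IsNowhereDense (N i)) :
    IsNowhereDense (⋃ i, N i) := by
  rw [IsNowhereDense, eq_empty_iff_forall_notMem]
  intro x hx
  set O := interior (closure (⋃ i, N i)) with hO
  have hOo : IsOpen O := isOpen_interior
  have hOVi : ∀ i, O ∩ V i = ∅ := by
    intro i
    have h1 : O ∩ V i ⊆ closure (⋃ j, N j) ∩ V i :=
      inter_subset_inter_left _ interior_subset
    have h3 : V i ∩ (⋃ j, N j) ⊆ N i := by
      rintro y ⟨hy2, hy1⟩
      obtain ⟨j, hyj⟩ := mem_iUnion.mp hy1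
      by_cases hij : j = i
      · subst hij; exact hyj
      · exact absurd (mem_inter (hNV j hyj) hy2)
          (fun h => (hdisj j i hij).ne_of_mem h.1 h.2 rfl)
    have hsub : O ∩ V i ⊆ closure (N i) := by
      rintro y ⟨hyO, hyV⟩
      exact closure_mono h3 ((hVo i).inter_closure ⟨hyV, interior_subset hyO⟩)
    have hopen : IsOpen (O ∩ V i) := hOo.inter (hVo i)
    have : O ∩ V i ⊆ interior (closure (N i)) := hopen.subset_interior_iff.mpr hsub
    rw [hnwd i] at this
    exact eq_empty_of_subset_empty this
  have hxcl : x ∈ closure (⋃ i, N i) := interior_subset hx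
  obtain ⟨y, hyO, hyN⟩ := mem_closure_iff.mp hxcl O hOo hx
  obtain ⟨i, hyi⟩ := mem_iUnion.mp hyN
  have : y ∈ O ∩ V i := ⟨hyO, hNV i hyi⟩
  rw [hOVi i] at this
  exact this

/-- A meagre set decomposes into a countable sequence of nowhere dense sets. -/
lemma isMeagre_exists_seq {s : Set X} (hs : IsMeagre s) :
    ∃ C : ℕ → Set X, (∀ n, IsNowhereDense (C n)) ∧ s ⊆ ⋃ n, C n := by
  obtain ⟨S, hSnwd, hScnt, hSsub⟩ := isMeagre_iff_countable_union_isNowhereDense.mp hs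
  rcases S.eq_empty_or_nonempty with rfl | hSne
  · exact ⟨fun _ => ∅, fun _ => isNowhereDense_empty, by simpa using hSsub⟩
  · obtain ⟨f, hf⟩ := hScnt.exists_eq_range hSne
    refine ⟨f, fun n => hSnwd _ (by rw [hf]; exact mem_range_self n), ?_⟩
    rwa [hf, sUnion_range] at hSsub

/-- A union of meagre sets, each contained in one of a pairwise disjoint family of
open sets, is meagre. -/
lemma isMeagre_iUnion_disjoint {ι : Type*} (V : ι → Set X) (m : ι → Set X)
    (hVo : ∀ i, IsOpen (V i)) (hdisj : ∀ i j, i ≠ j → Disjoint (V i) (V j))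
    (hmV : ∀ i, m i ⊆ V i) (hm : ∀ i, IsMeagre (m i)) :
    IsMeagre (⋃ i, m i) := by
  have h := fun i => isMeagre_exists_seq (hm i)
  choose C hCnwd hCsub using h
  have hsub : (⋃ i, m i) ⊆ ⋃ n : ℕ, ⋃ i, (C i n ∩ V i) := by
    intro x hx
    obtain ⟨i, hxi⟩ := mem_iUnion.mp hx
    obtain ⟨n, hxn⟩ := mem_iUnion.mp (hCsub i hxi)
    exact mem_iUnion.mpr ⟨n, mem_iUnion.mpr ⟨i, hxn, hmV i hxi⟩⟩
  refine IsMeagre.mono hsub (isMeagre_iUnion (fun n => ?_))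
  exact (isNowhereDense_iUnion_disjoint V (fun i => C i n ∩ V i) hVo hdisj
    (fun i => inter_subset_right)
    (fun i => isNowhereDense_mono (hCnwd i n) inter_subset_left)).isMeagre'

/-! ### Maximal disjoint families of open sets -/

lemma exists_maximal_disjoint_family (P : Set X → Prop) :
    ∃ 𝒱 : Set (Set X), (∀ V ∈ 𝒱, IsOpen V ∧ V.Nonempty ∧ P V) ∧
      (∀ V ∈ 𝒱, ∀ V' ∈ 𝒱, V ≠ V' → Disjoint V V') ∧
      ∀ V', IsOpen V' → V'.Nonempty → P V' → ¬ Disjoint V' (⋃₀ 𝒱) := by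
  set S : Set (Set (Set X)) :=
    {𝒱 | (∀ V ∈ 𝒱, IsOpen V ∧ V.Nonempty ∧ P V) ∧
      ∀ V ∈ 𝒱, ∀ V' ∈ 𝒱, V ≠ V' → Disjoint V V'} with hS
  obtain ⟨𝒱, h𝒱⟩ := zorn_subset S (by
    intro c hcS hchain
    refine ⟨⋃₀ c, ⟨?_, ?_⟩, fun s hs => subset_sUnion_of_mem hs⟩
    · rintro V ⟨𝒲, h𝒲c, hV𝒲⟩
      exact (hcS h𝒲c).1 V hV𝒲
    · rintro V ⟨𝒲, h𝒲c, hV𝒲⟩ V' ⟨𝒲', h𝒲'c, hV'𝒲'⟩ hne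
      rcases hchain.total h𝒲c h𝒲'c with h | h
      · exact (hcS h𝒲'c).2 V (h hV𝒲) V' hV'𝒲' hne
      · exact (hcS h𝒲c).2 V hV𝒲 V' (h hV'𝒲') hne)
  refine ⟨𝒱, h𝒱.prop.1, h𝒱.prop.2, ?_⟩
  intro V' hV'o hV'ne hPV' hdisj
  have hmem : insert V' 𝒱 ∈ S := by
    constructor
    · rintro V (rfl | hV)
      · exact ⟨hV'o, hV'ne, hPV'⟩
      · exact h𝒱.prop.1 V hV
    · rintro V (rfl | hV) W (rfl | hW) hne
      · exact absurd rfl hne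
      · exact hdisj.mono_right (subset_sUnion_of_mem hW)
      · exact (hdisj.mono_right (subset_sUnion_of_mem hV)).symm
      · exact h𝒱.prop.2 V hV W hW hne
  have hsub : insert V' 𝒱 ⊆ 𝒱 := h𝒱.2 hmem (subset_insert _ _)
  have hV'mem : V' ∈ 𝒱 := hsub (mem_insert _ _)
  have : Disjoint V' V' := hdisj.mono_right (subset_sUnion_of_mem hV'mem)
  rw [disjoint_self] at this
  exact hV'ne.ne_empty (by simpa using this)

/-- Localization: a non-meagre set `Y ⊆ W₀` is everywhere non-meagre on some nonempty
open subset of `W₀`. -/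
lemma exists_open_everywhere_nonmeagre {Y W₀ : Set X} (hY : ¬ IsMeagre Y)
    (hYW : Y ⊆ W₀) (hW₀ : IsOpen W₀) :
    ∃ W₂ : Set X, IsOpen W₂ ∧ W₂.Nonempty ∧ W₂ ⊆ W₀ ∧
      ∀ N, N ⊆ W₂ → IsOpen N → N.Nonempty → ¬ IsMeagre (Y ∩ N) := by
  obtain ⟨𝒩, h𝒩, h𝒩disj, h𝒩max⟩ :=
    exists_maximal_disjoint_family (fun O => IsMeagre (Y ∩ O))
  set D : Set X := ⋃₀ 𝒩 with hD
  have hDo : IsOpen D := isOpen_sUnion (fun O hO => (h𝒩 O hO).1)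
  have hm₁ : IsMeagre (Y ∩ D) := by
    have : Y ∩ D = ⋃ O : 𝒩, (Y ∩ O.1) := by
      ext x
      constructor
      · rintro ⟨hxY, O, hO, hxO⟩
        exact mem_iUnion.mpr ⟨⟨O, hO⟩, hxY, hxO⟩
      · intro hx
        obtain ⟨O, hxY, hxO⟩ := mem_iUnion.mp hx
        exact ⟨hxY, O.1, O.2, hxO⟩
    rw [this]
    exact isMeagre_iUnion_disjoint (fun O : 𝒩 => O.1) (fun O : 𝒩 => Y ∩ O.1)
      (fun O => (h𝒩 O.1 O.2).1)
      (fun i j hij => h𝒩disj i.1 i.2 j.1 j.2 (fun h => hij (Subtype.ext h)))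
      (fun O => inter_subset_right)
      (fun O => (h𝒩 O.1 O.2).2.2)
  have hm₂ : IsMeagre (Y ∩ (closure D \ D)) :=
    ((isNowhereDense_closure_diff hDo).isMeagre').mono inter_subset_right
  have hYrem : ¬ IsMeagre (Y \ closure D) := by
    intro h
    apply hY
    have : Y ⊆ (Y \ closure D) ∪ ((Y ∩ D) ∪ (Y ∩ (closure D \ D))) := by
      intro x hx
      by_cases h1 : x ∈ closure D
      · by_cases h2 : x ∈ D
        · exact Or.inr (Or.inl ⟨hx, h2⟩)
        · exact Or.inr (Or.inr ⟨hx, h1, h2⟩)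
      · exact Or.inl ⟨hx, h1⟩
    exact (isMeagre_union' h (isMeagre_union' hm₁ hm₂)).mono this
  refine ⟨(closure D)ᶜ ∩ W₀, (isClosed_closure.isOpen_compl).inter hW₀, ?_, inter_subset_right, ?_⟩
  · obtain ⟨x, hx⟩ := not_isMeagre_nonempty hYrem
    exact ⟨x, hx.2, hYW hx.1⟩
  · intro N hNsub hNo hNne hNm
    have : ¬ Disjoint N D := h𝒩max N hNo hNne hNm
    apply this
    rw [disjoint_iff_inter_eq_empty, eq_empty_iff_forall_notMem]
    rintro x ⟨hxN, hxD⟩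
    exact (hNsub hxN).1 (subset_closure hxD)

/-- In a Baire space, a nonempty open set is non-meagre. -/
lemma not_isMeagre_open [BaireSpace X] {U : Set X} (hU : IsOpen U) (hne : U.Nonempty) :
    ¬ IsMeagre U := by
  intro h
  have hd : Dense Uᶜ := dense_of_mem_residual h
  obtain ⟨x, hx1, hx2⟩ := hd.inter_open_nonempty U hU hne
  exact hx2 hx1

end Aux

section Main

variable {X : Type*} [TopologicalSpace X] [BaireSpace X]

/-- The core lemma: under the hypotheses, every nonempty open set contains a nonempty open
set `V` carrying a comeagre-in-`V` set `B` together with a partition of `B` into meagre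
pieces all of whose subunions have the Baire property, witnessed inside `V`. -/
lemma good_open_exists
    (G : Set (Set X)) (hcov : ⋃₀ G = Set.univ)
    (hpf : ∀ x : X, {s ∈ G | x ∈ s}.Finite)
    (hmeager : ∀ s ∈ G, IsMeagre s)
    (hCA : ∀ G' ⊆ G, HasBaireProperty (⋃₀ G'))
    (W : Set X) (hW : IsOpen W) (hWne : W.Nonempty) :
    ∃ (V B : Set X) (P : Set (Set X)), IsOpen V ∧ V.Nonempty ∧ V ⊆ W ∧ B ⊆ V ∧
      IsMeagre (V \ B) ∧
      (∀ p ∈ P, p ⊆ B ∧ IsMeagre p) ∧ (∀ p ∈ P, ∀ q ∈ P, p ≠ q → Disjoint p q) ∧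
      ⋃₀ P = B ∧
      ∀ Q ⊆ P, ∃ U, IsOpen U ∧ U ⊆ V ∧ IsMeagre (symmDiff U (⋃₀ Q)) := by
  classical
  -- multiplicity sets
  set T : Set (Set X) → X → Set (Set X) := fun A x => {s ∈ A | x ∈ s} with hT
  have hTfin : ∀ (A : Set (Set X)), A ⊆ G → ∀ x, (T A x).Finite := by
    intro A hA x
    exact (hpf x).subset (fun s hs => ⟨hA hs.1, hs.2⟩)
  set L : Set X → Set (Set X) → ℕ → Set X :=
    fun N A m => {x ∈ N | (T A x).Nonempty ∧ (T A x).ncard ≤ m} with hL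
  set pred : ℕ → Prop := fun m =>
    ∃ N A, IsOpen N ∧ N ⊆ W ∧ A ⊆ G ∧ ¬ IsMeagre (L N A m) with hpreddef
  -- there is some level
  have hWnm : ¬ IsMeagre W := not_isMeagre_open hW hWne
  have hex : ∃ m, pred m := by
    by_contra hno
    push_neg at hno
    apply hWnm
    have hWsub : W ⊆ ⋃ m : ℕ, L W G m := by
      intro x hxW
      have hx : x ∈ ⋃₀ G := by rw [hcov]; trivial
      obtain ⟨s, hsG, hxs⟩ := hx
      have hne : (T G x).Nonempty := ⟨s, hsG, hxs⟩
      exact mem_iUnion.mpr ⟨(T G x).ncard, hxW, hne, le_rfl⟩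
    refine IsMeagre.mono hWsub (isMeagre_iUnion (fun m => ?_))
    by_contra hmm
    exact (hno m) ⟨W, G, hW, subset_rfl, subset_rfl, hmm⟩
  set n : ℕ := Nat.find hex with hn
  have hpred : pred n := Nat.find_spec hex
  have hmin : ∀ m, m < n → ¬ pred m := fun m hm => Nat.find_min hex hm
  obtain ⟨W₀, H, hW₀o, hW₀W, hHG, hY⟩ := hpred
  set Y : Set X := L W₀ H n with hYdef
  -- n ≥ 1
  have hn1 : 1 ≤ n := by
    rcases Nat.eq_zero_or_pos n with h0 | h
    · exfalso
      apply hY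
      have : Y = ∅ := by
        rw [eq_empty_iff_forall_notMem]
        rintro x ⟨hx1, hx2, hx3⟩
        rw [h0, Nat.le_zero] at hx3
        rw [← Set.ncard_pos (hTfin H hHG x)] at hx2
        omega
      rw [this]
      exact IsMeagre.empty
    · exact h
  have hYW₀ : Y ⊆ W₀ := fun x hx => hx.1
  -- localization
  obtain ⟨W₂, hW₂o, hW₂ne, hW₂W₀, hloc⟩ := exists_open_everywhere_nonmeagre hY hYW₀ hW₀o
  have hW₂W : W₂ ⊆ W := hW₂W₀.trans hW₀W
  -- key cross-meagreness lemma
  have key : ∀ A A' : Set (Set X), A ⊆ H → A' ⊆ H → (∀ s ∈ A, s ∉ A') →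
      IsMeagre (⋃₀ A ∩ ⋃₀ A' ∩ W₂) := by
    intro A A' hAH hA'H hdisj
    by_contra hC
    set C : Set X := ⋃₀ A ∩ ⋃₀ A' ∩ W₂ with hCdef
    have hCW₂ : C ⊆ W₂ := inter_subset_right
    obtain ⟨U, hUo, hUm⟩ :=
      hasBaireProperty_inter
        (hasBaireProperty_inter (hCA A (hAH.trans hHG)) (hCA A' (hA'H.trans hHG)))
        hW₂o.hasBaireProperty'
    -- C ∩ U is non-meagre
    have hCU : ¬ IsMeagre (C ∩ U) := by
      have hsub : C \ U ⊆ symmDiff U C := by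
        intro x hx; rw [mem_symmDiff]; exact Or.inr ⟨hx.1, hx.2⟩
      have h1 : ¬ IsMeagre (C \ (C \ U)) := not_isMeagre_diff hC (hUm.mono hsub)
      refine not_isMeagre_mono h1 ?_
      intro x hx
      refine ⟨hx.1, ?_⟩
      by_contra hxu
      exact hx.2 ⟨hx.1, hxu⟩
    set N : Set X := U ∩ W₂ with hNdef
    have hCUN : C ∩ U ⊆ N := fun x hx => ⟨hx.2, hCW₂ hx.1⟩
    have hNne : N.Nonempty := (not_isMeagre_nonempty hCU).mono hCUN
    have hNo : IsOpen N := hUo.inter hW₂o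
    have hYN : ¬ IsMeagre (Y ∩ N) := hloc N inter_subset_right hNo hNne
    -- Y ∩ N ∩ C is non-meagre
    have hYNC : ¬ IsMeagre (Y ∩ N ∩ C) := by
      have hsub : (Y ∩ N) \ C ⊆ symmDiff U C := by
        rintro x ⟨⟨hxY, hxN⟩, hxC⟩
        rw [mem_symmDiff]
        exact Or.inl ⟨hxN.1, hxC⟩
      have h1 : ¬ IsMeagre ((Y ∩ N) \ ((Y ∩ N) \ C)) :=
        not_isMeagre_diff hYN (hUm.mono (fun x hx => hsub hx))
      refine not_isMeagre_mono h1 ?_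
      intro x hx
      refine ⟨hx.1, ?_⟩
      by_contra hxc
      exact hx.2 ⟨hx.1, hxc⟩
    -- inclusion into a lower level set
    have hincl : Y ∩ N ∩ C ⊆ L N A (n - 1) := by
      rintro x ⟨⟨hxY, hxN⟩, hxC⟩
      obtain ⟨hxW₀, hxTne, hxTle⟩ : x ∈ W₀ ∧ (T H x).Nonempty ∧ (T H x).ncard ≤ n := hxY
      obtain ⟨sA, hsA, hxsA⟩ : x ∈ ⋃₀ A := hxC.1.1
      obtain ⟨sA', hsA', hxsA'⟩ : x ∈ ⋃₀ A' := hxC.1.2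
      refine ⟨hxN, ⟨sA, hsA, hxsA⟩, ?_⟩
      have hfinH := hTfin H hHG x
      have hfinA : (T A x).Finite := hfinH.subset (fun s hs => ⟨hAH hs.1, hs.2⟩)
      have hfinA' : (T A' x).Finite := hfinH.subset (fun s hs => ⟨hA'H hs.1, hs.2⟩)
      have hdisjT : Disjoint (T A x) (T A' x) := by
        rw [disjoint_iff_inter_eq_empty, eq_empty_iff_forall_notMem]
        rintro s ⟨hs1, hs2⟩
        exact hdisj s hs1.1 hs2.1
      have hunion : (T A x ∪ T A' x) ⊆ T H x := by
        rintro s (hs | hs)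
        · exact ⟨hAH hs.1, hs.2⟩
        · exact ⟨hA'H hs.1, hs.2⟩
      have h1 : (T A x).ncard + (T A' x).ncard = (T A x ∪ T A' x).ncard :=
        (Set.ncard_union_eq hdisjT hfinA hfinA').symm
      have h2 : (T A x ∪ T A' x).ncard ≤ (T H x).ncard :=
        Set.ncard_le_ncard hunion hfinH
      have h3 : 0 < (T A' x).ncard := (Set.ncard_pos hfinA').mpr ⟨sA', hsA', hxsA'⟩
      omega
    have : pred (n - 1) :=
      ⟨N, A, hNo, (inter_subset_right).trans hW₂W, hAH.trans hHG,
        not_isMeagre_mono hYNC hincl⟩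
    exact hmin (n - 1) (by omega) this
  -- the hull V
  set SH : Set X := ⋃₀ H with hSH
  have hC' : ¬ IsMeagre (SH ∩ W₂) := by
    have hYW₂ : ¬ IsMeagre (Y ∩ W₂) := hloc W₂ subset_rfl hW₂o hW₂ne
    refine not_isMeagre_mono hYW₂ ?_
    rintro x ⟨hxY, hxW₂⟩
    obtain ⟨hxW₀, hxTne, hxTle⟩ : x ∈ W₀ ∧ (T H x).Nonempty ∧ (T H x).ncard ≤ n := hxY
    obtain ⟨s, hs, hxs⟩ := hxTne
    exact ⟨⟨s, hs, hxs⟩, hxW₂⟩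
  obtain ⟨U', hU'o, hU'm⟩ :=
    hasBaireProperty_inter (hCA H hHG) hW₂o.hasBaireProperty'
  set V : Set X := U' ∩ W₂ with hVdef
  have hVo : IsOpen V := hU'o.inter hW₂o
  have hVne : V.Nonempty := by
    have hsub : (SH ∩ W₂) \ U' ⊆ symmDiff U' (SH ∩ W₂) := by
      intro x hx; rw [mem_symmDiff]; exact Or.inr ⟨hx.1, hx.2⟩
    have h1 : ¬ IsMeagre ((SH ∩ W₂) \ ((SH ∩ W₂) \ U')) :=
      not_isMeagre_diff hC' (hU'm.mono hsub)
    obtain ⟨x, hx⟩ := not_isMeagre_nonempty h1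
    have hxU' : x ∈ U' := by
      by_contra hxu
      exact hx.2 ⟨hx.1, hxu⟩
    exact ⟨x, hxU', hx.1.2⟩
  set B : Set X := SH ∩ V with hBdef
  have hBV : B ⊆ V := inter_subset_right
  have hVB : IsMeagre (V \ B) := by
    refine hU'm.mono ?_
    rintro x ⟨hxV, hxB⟩
    rw [mem_symmDiff]
    refine Or.inl ⟨hxV.1, ?_⟩
    rintro ⟨hxSH, hxW₂⟩
    exact hxB ⟨hxSH, hxV⟩
  -- choice function
  set μ : X → Set X := fun x => if h : (T H x).Nonempty then h.choose else ∅ with hμdef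
  have hμ : ∀ x, (T H x).Nonempty → μ x ∈ T H x := by
    intro x h
    simp only [hμdef, dif_pos h]
    exact h.choose_spec
  have hBne : ∀ x ∈ B, (T H x).Nonempty := by
    rintro x ⟨hxSH, _⟩
    obtain ⟨s, hs, hxs⟩ := hxSH
    exact ⟨s, hs, hxs⟩
  set f : Set X → Set X := fun s => {x ∈ B | μ x = s} with hf
  set P : Set (Set X) := f '' H with hP
  refine ⟨V, B, P, hVo, hVne, (inter_subset_right).trans hW₂W, hBV, hVB, ?_, ?_, ?_, ?_⟩
  · -- pieces are ⊆ B and meagre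
    rintro p ⟨s, hsH, rfl⟩
    refine ⟨fun x hx => hx.1, ?_⟩
    refine (hmeager s (hHG hsH)).mono ?_
    rintro x ⟨hxB, hxμ⟩
    have := hμ x (hBne x hxB)
    rw [hxμ] at this
    exact this.2
  · -- pieces pairwise disjoint
    rintro p ⟨s, hsH, rfl⟩ q ⟨t, htH, rfl⟩ hne
    rw [disjoint_iff_inter_eq_empty, eq_empty_iff_forall_notMem]
    rintro x ⟨⟨hxB, hxs⟩, ⟨hxB', hxt⟩⟩
    exact hne (by rw [← hxs, ← hxt])
  · -- union of pieces is B
    apply Subset.antisymm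
    · rintro x ⟨p, ⟨s, hsH, rfl⟩, hxp⟩
      exact hxp.1
    · intro x hxB
      have hne := hBne x hxB
      have hmem := hμ x hne
      exact ⟨f (μ x), ⟨μ x, hmem.1, rfl⟩, hxB, rfl⟩
  · -- subunions have the Baire property
    intro Q hQP
    set K : Set (Set X) := {s ∈ H | f s ∈ Q} with hK
    have hKH : K ⊆ H := fun s hs => hs.1
    have hQeq : ⋃₀ Q = {x ∈ B | μ x ∈ K} := by
      apply Subset.antisymm
      · rintro x ⟨q, hqQ, hxq⟩
        obtain ⟨s, hsH, rfl⟩ := hQP hqQ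
        obtain ⟨hxB, hxμ⟩ := hxq
        refine ⟨hxB, ?_⟩
        rw [hxμ]
        exact ⟨hsH, hqQ⟩
      · rintro x ⟨hxB, hμK⟩
        exact ⟨f (μ x), hμK.2, hxB, rfl⟩
    set R : Set X := {x ∈ B | μ x ∈ K} with hR
    obtain ⟨UK, hUKo, hUKm⟩ := hCA K (hKH.trans hHG)
    have hRsub : R ⊆ ⋃₀ K ∩ V := by
      rintro x ⟨hxB, hxK⟩
      have hmem := hμ x (hBne x hxB)
      exact ⟨⟨μ x, hxK, hmem.2⟩, hxB.2⟩
    have hcross : IsMeagre (⋃₀ K ∩ ⋃₀ (H \ K) ∩ W₂) :=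
      key K (H \ K) hKH diff_subset (fun s hs hs' => hs'.2 hs)
    have hdiff : (⋃₀ K ∩ V) \ R ⊆ (⋃₀ K ∩ ⋃₀ (H \ K) ∩ W₂) ∪ (V \ B) := by
      rintro x ⟨⟨hxK, hxV⟩, hxR⟩
      by_cases hxB : x ∈ B
      · have hmem := hμ x (hBne x hxB)
        have hμnK : μ x ∉ K := fun h => hxR ⟨hxB, h⟩
        exact Or.inl ⟨⟨hxK, ⟨μ x, ⟨hmem.1, hμnK⟩, hmem.2⟩⟩, hxV.2⟩
      · exact Or.inr ⟨hxV, hxB⟩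
    have hmR : IsMeagre ((⋃₀ K ∩ V) \ R) :=
      (isMeagre_union' hcross hVB).mono hdiff
    refine ⟨UK ∩ V, hUKo.inter hVo, inter_subset_right, ?_⟩
    have htri : symmDiff (UK ∩ V) (⋃₀ Q) ⊆
        symmDiff UK (⋃₀ K) ∪ ((⋃₀ K ∩ V) \ R) := by
      rw [hQeq]
      intro x hx
      rw [mem_symmDiff] at hx
      rcases hx with ⟨⟨hxUK, hxV⟩, hxR⟩ | ⟨hxR, hxUKV⟩
      · by_cases hxK : x ∈ ⋃₀ K
        · exact Or.inr ⟨⟨hxK, hxV⟩, hxR⟩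
        · exact Or.inl (by rw [mem_symmDiff]; exact Or.inl ⟨hxUK, hxK⟩)
      · have hxKV := hRsub hxR
        by_cases hxUK : x ∈ UK
        · exact absurd ⟨hxUK, hxKV.2⟩ hxUKV
        · exact Or.inl (by rw [mem_symmDiff]; exact Or.inr ⟨hxKV.1, hxUK⟩)
    exact (isMeagre_union' hUKm hmR).mono htri

end Main

section Transfer

variable {X : Type*} [TopologicalSpace X]

/-- Preimage of a nowhere dense set under the inclusion of a dense subset is nowhere dense. -/
lemma isNowhereDense_preimage_val {B : Set X} (hB : Dense B) {N : Set X}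
    (hN : IsNowhereDense N) : IsNowhereDense ((Subtype.val : B → X) ⁻¹' N) := by
  have h1 : closure ((Subtype.val : B → X) ⁻¹' N) ⊆
      (Subtype.val : B → X) ⁻¹' (closure N) :=
    continuous_subtype_val.closure_preimage_subset N
  rw [IsNowhereDense, eq_empty_iff_forall_notMem]
  intro x hx
  have hx2 : x ∈ interior ((Subtype.val : B → X) ⁻¹' (closure N)) :=
    interior_mono h1 hx
  obtain ⟨t, htsub, hto, hxt⟩ := mem_interior.mp hx2
  obtain ⟨O, hOo, rfl⟩ := isOpen_induced_iff.mp hto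
  have hOB : O ∩ B ⊆ closure N := by
    rintro y ⟨hyO, hyB⟩
    exact htsub (show (⟨y, hyB⟩ : B) ∈ _ from hyO)
  have hOsub : O ⊆ closure N := by
    calc O ⊆ closure (O ∩ B) := hB.open_subset_closure_inter hOo
    _ ⊆ closure (closure N) := closure_mono hOB
    _ = closure N := closure_closure
  have : (x : X) ∈ interior (closure N) :=
    mem_interior.mpr ⟨O, hOsub, hOo, hxt⟩
  rw [hN] at this
  exact this

lemma isMeagre_preimage_val {B : Set X} (hB : Dense B) {m : Set X} (hm : IsMeagre m) :
    IsMeagre ((Subtype.val : B → X) ⁻¹' m) := by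
  obtain ⟨C, hCnwd, hCsub⟩ := isMeagre_exists_seq hm
  have hsub : (Subtype.val : B → X) ⁻¹' m ⊆ ⋃ n, (Subtype.val : B → X) ⁻¹' (C n) := by
    intro x hx
    obtain ⟨n, hn⟩ := mem_iUnion.mp (hCsub hx)
    exact mem_iUnion.mpr ⟨n, hn⟩
  exact IsMeagre.mono hsub
    (isMeagre_iUnion (fun n => (isNowhereDense_preimage_val hB (hCnwd n)).isMeagre'))

lemma hasBaireProperty_preimage_val {B : Set X} (hB : Dense B) {s : Set X}
    (hs : HasBaireProperty s) : HasBaireProperty ((Subtype.val : B → X) ⁻¹' s) := by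
  obtain ⟨U, hUo, hUm⟩ := hs
  refine ⟨(Subtype.val : B → X) ⁻¹' U, hUo.preimage continuous_subtype_val, ?_⟩
  have heq : symmDiff ((Subtype.val : B → X) ⁻¹' U) ((Subtype.val : B → X) ⁻¹' s) =
      (Subtype.val : B → X) ⁻¹' (symmDiff U s) := by
    ext x
    simp [Set.mem_symmDiff]
  rw [heq]
  exact isMeagre_preimage_val hB hUm

end Transfer

theorem stmt_7 {X : Type*} [TopologicalSpace X] [T2Space X] [BaireSpace X]
    (G : Set (Set X)) (hcov : ⋃₀ G = Set.univ)
    (hpf : ∀ x : X, {s ∈ G | x ∈ s}.Finite)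
    (hmeager : ∀ s ∈ G, IsMeagre s)
    (hCA : ∀ G' ⊆ G, HasBaireProperty (⋃₀ G')) :
    ∃ B : Set X, IsMeagre Bᶜ ∧ ∃ F : Set (Set B), KuratowskiPartition B F := by
  classical
  -- the goodness predicate
  set GoodP : Set X → Prop := fun V => ∃ (B : Set X) (P : Set (Set X)), B ⊆ V ∧ IsMeagre (V \ B) ∧
      (∀ p ∈ P, p ⊆ B ∧ IsMeagre p) ∧ (∀ p ∈ P, ∀ q ∈ P, p ≠ q → Disjoint p q) ∧
      ⋃₀ P = B ∧
      ∀ Q ⊆ P, ∃ U, IsOpen U ∧ U ⊆ V ∧ IsMeagre (symmDiff U (⋃₀ Q)) with hGoodP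
  obtain ⟨𝒱, h𝒱good, h𝒱disj, h𝒱max⟩ := exists_maximal_disjoint_family GoodP
  set D : Set X := ⋃₀ 𝒱 with hD
  have hDo : IsOpen D := isOpen_sUnion (fun V hV => (h𝒱good V hV).1)
  -- ⋃₀ 𝒱 is dense
  have hDd : Dense D := by
    rw [dense_iff_inter_open]
    intro W hWo hWne
    by_contra hWD
    rw [not_nonempty_iff_eq_empty] at hWD
    obtain ⟨V, B, P, hVo, hVne, hVW, hrest⟩ :=
      good_open_exists G hcov hpf hmeager hCA W hWo hWne
    have hGP : GoodP V := ⟨B, P, hrest.1, hrest.2.1, hrest.2.2.1, hrest.2.2.2.1,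
      hrest.2.2.2.2.1, hrest.2.2.2.2.2⟩
    refine h𝒱max V hVo hVne hGP ?_
    rw [disjoint_iff_inter_eq_empty, eq_empty_iff_forall_notMem]
    rintro x ⟨hxV, hxD⟩
    have : x ∈ W ∩ D := ⟨hVW hxV, hxD⟩
    rw [hWD] at this
    exact this
  have hgood : ∀ V : 𝒱, GoodP V.1 := fun V => (h𝒱good V.1 V.2).2.2
  choose Bf Pf hBf hVBm hPm hPd hPu hPQ using hgood
  set Bset : Set X := ⋃ V : 𝒱, Bf V with hBset
  have hsubdisj : ∀ (i j : 𝒱), i ≠ j → Disjoint (i.1) (j.1) :=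
    fun i j hij => h𝒱disj i.1 i.2 j.1 j.2 (fun h => hij (Subtype.ext h))
  -- Bset is comeagre
  have hBmeag : IsMeagre Bsetᶜ := by
    have hsub : Bsetᶜ ⊆ Dᶜ ∪ ⋃ V : 𝒱, (V.1 \ Bf V) := by
      intro x hx
      by_cases hxD : x ∈ D
      · obtain ⟨V, hV𝒱, hxV⟩ := hxD
        refine Or.inr (mem_iUnion.mpr ⟨⟨V, hV𝒱⟩, hxV, ?_⟩)
        intro hxB
        exact hx (mem_iUnion.mpr ⟨⟨V, hV𝒱⟩, hxB⟩)
      · exact Or.inl hxD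
    have h1 : IsMeagre (Dᶜ) := by
      refine IsNowhereDense.isMeagre' ?_
      rw [IsNowhereDense, (isOpen_sUnion (fun V hV => (h𝒱good V hV).1)).isClosed_compl.closure_eq,
        interior_compl, eq_empty_iff_forall_notMem]
      intro x hx
      rw [hDd.closure_eq] at hx
      exact hx trivial
    have h2 : IsMeagre (⋃ V : 𝒱, (V.1 \ Bf V)) :=
      isMeagre_iUnion_disjoint (fun V : 𝒱 => V.1) (fun V : 𝒱 => V.1 \ Bf V)
        (fun V => (h𝒱good V.1 V.2).1) hsubdisj (fun V => diff_subset) hVBm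
    exact (isMeagre_union' h1 h2).mono hsub
  have hBd : Dense Bset := by
    have : Bsetᶜᶜ ∈ residual X := hBmeag
    rw [compl_compl] at this
    exact dense_of_mem_residual this
  set Pieces : Set (Set X) := {p | ∃ V : 𝒱, p ∈ Pf V} with hPieces
  have hPsubB : ∀ p ∈ Pieces, p ⊆ Bset ∧ IsMeagre p := by
    rintro p ⟨V, hpV⟩
    exact ⟨(hPm V p hpV).1.trans (subset_iUnion (fun V : 𝒱 => Bf V) V), (hPm V p hpV).2⟩
  have hPdisj : ∀ p ∈ Pieces, ∀ q ∈ Pieces, p ≠ q → Disjoint p q := by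
    rintro p ⟨V, hpV⟩ q ⟨V', hqV'⟩ hne
    by_cases hVV' : V = V'
    · subst hVV'
      exact hPd V p hpV q hqV' hne
    · exact (hsubdisj V V' hVV').mono
        ((hPm V p hpV).1.trans (hBf V)) ((hPm V' q hqV').1.trans (hBf V'))
  have hPunion : ⋃₀ Pieces = Bset := by
    apply Subset.antisymm
    · rintro x ⟨p, ⟨V, hpV⟩, hxp⟩
      exact (hPsubB p ⟨V, hpV⟩).1 hxp
    · intro x hx
      obtain ⟨V, hxV⟩ := mem_iUnion.mp hx
      have : x ∈ ⋃₀ Pf V := by rw [hPu V]; exact hxV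
      obtain ⟨p, hpV, hxp⟩ := this
      exact ⟨p, ⟨V, hpV⟩, hxp⟩
  -- Baire property of subunions in X
  have hPBP : ∀ Q ⊆ Pieces, HasBaireProperty (⋃₀ Q) := by
    intro Q hQ
    have h := fun V : 𝒱 => hPQ V (Q ∩ Pf V) inter_subset_right
    choose Uf hUfo hUfV hUfm using h
    refine ⟨⋃ V : 𝒱, Uf V, isOpen_iUnion hUfo, ?_⟩
    have hQsplit : ⋃₀ Q = ⋃ V : 𝒱, ⋃₀ (Q ∩ Pf V) := by
      apply Subset.antisymm
      · rintro x ⟨q, hqQ, hxq⟩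
        obtain ⟨V, hqV⟩ := hQ hqQ
        exact mem_iUnion.mpr ⟨V, q, ⟨hqQ, hqV⟩, hxq⟩
      · rintro x hx
        obtain ⟨V, q, hq, hxq⟩ := mem_iUnion.mp hx
        exact ⟨q, hq.1, hxq⟩
    have hAsub : ∀ V : 𝒱, ⋃₀ (Q ∩ Pf V) ⊆ V.1 := by
      rintro V x ⟨q, hq, hxq⟩
      exact hBf V ((hPm V q hq.2).1 hxq)
    have htri : symmDiff (⋃ V : 𝒱, Uf V) (⋃₀ Q) ⊆
        ⋃ V : 𝒱, symmDiff (Uf V) (⋃₀ (Q ∩ Pf V)) := by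
      rw [hQsplit]
      intro x hx
      rw [mem_symmDiff] at hx
      rcases hx with ⟨hxU, hxA⟩ | ⟨hxA, hxU⟩
      · obtain ⟨V, hxV⟩ := mem_iUnion.mp hxU
        refine mem_iUnion.mpr ⟨V, ?_⟩
        rw [mem_symmDiff]
        exact Or.inl ⟨hxV, fun h => hxA (mem_iUnion.mpr ⟨V, h⟩)⟩
      · obtain ⟨V, hxV⟩ := mem_iUnion.mp hxA
        refine mem_iUnion.mpr ⟨V, ?_⟩
        rw [mem_symmDiff]
        exact Or.inr ⟨hxV, fun h => hxU (mem_iUnion.mpr ⟨V, h⟩)⟩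
    refine IsMeagre.mono htri ?_
    refine isMeagre_iUnion_disjoint (fun V : 𝒱 => V.1)
      (fun V : 𝒱 => symmDiff (Uf V) (⋃₀ (Q ∩ Pf V)))
      (fun V => (h𝒱good V.1 V.2).1) hsubdisj ?_ ?_
    · intro V x hx
      rw [mem_symmDiff] at hx
      rcases hx with ⟨h1, _⟩ | ⟨h1, _⟩
      · exact hUfV V h1
      · exact hAsub V h1
    · exact hUfm
  -- transfer to the subtype
  refine ⟨Bset, hBmeag, ?_⟩
  set F : Set (Set Bset) :=
    {f | ∃ p ∈ Pieces, p.Nonempty ∧ f = (Subtype.val : Bset → X) ⁻¹' p} with hF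
  refine ⟨F, ?_, ?_, ?_, ?_, ?_⟩
  · -- meagre pieces
    rintro f ⟨p, hpP, hpne, rfl⟩
    exact isMeagre_preimage_val hBd (hPsubB p hpP).2
  · -- nonempty pieces
    rintro f ⟨p, hpP, ⟨x, hxp⟩, rfl⟩
    exact ⟨⟨x, (hPsubB p hpP).1 hxp⟩, hxp⟩
  · -- pairwise disjoint
    rintro f ⟨p, hpP, hpne, rfl⟩ g ⟨q, hqP, hqne, rfl⟩ hne
    have hpq : p ≠ q := by
      rintro rfl
      exact hne rfl
    have hd := hPdisj p hpP q hqP hpq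
    rw [Set.disjoint_iff_inter_eq_empty] at hd
    show Disjoint ((Subtype.val : Bset → X) ⁻¹' p) ((Subtype.val : Bset → X) ⁻¹' q)
    rw [Set.disjoint_iff_inter_eq_empty, ← preimage_inter, hd, preimage_empty]
  · -- covers
    rw [eq_univ_iff_forall]
    intro b
    have : (b : X) ∈ ⋃₀ Pieces := by rw [hPunion]; exact b.2
    obtain ⟨p, hpP, hbp⟩ := this
    exact ⟨(Subtype.val : Bset → X) ⁻¹' p, ⟨p, hpP, ⟨b, hbp⟩, rfl⟩, hbp⟩
  · -- subunions have the Baire property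
    intro F' hF'
    set Q : Set (Set X) := {p ∈ Pieces | p.Nonempty ∧ (Subtype.val : Bset → X) ⁻¹' p ∈ F'}
      with hQ
    have hQP : Q ⊆ Pieces := fun p hp => hp.1
    have heq : ⋃₀ F' = (Subtype.val : Bset → X) ⁻¹' (⋃₀ Q) := by
      apply Subset.antisymm
      · rintro x ⟨f, hfF', hxf⟩
        obtain ⟨p, hpP, hpne, rfl⟩ := hF' hfF'
        exact ⟨p, ⟨hpP, hpne, hfF'⟩, hxf⟩
      · rintro x ⟨p, hpQ, hxp⟩
        exact ⟨(Subtype.val : Bset → X) ⁻¹' p, hpQ.2.2, hxp⟩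
    rw [heq]
    exact hasBaireProperty_preimage_val hBd (hPBP Q hQP)
end

section
/- Let G be a family of subsets of X such that every point of X lies in exactly n members of G, with n ≥ 1 and G indexed as {Z_α : α < κ}. Define recursively Z_α^n = Z_α and Z_α^{k-1} = Z_α^k \ {x : min{β : x ∈ Z_β^k} = α}. Then every point of X lies in exactly k members of {Z_α^k : α < κ} for each 1 ≤ k ≤ n; in particular the sets Z_α^1 are pairwise disjoint and cover X. -/
theorem stmt_14 {α ι : Type*} [LinearOrder ι] [WellFoundedLT ι]
    (Z : ι → Set α) (n : ℕ) (hn : 1 ≤ n)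
    (hexact : ∀ x : α, {i : ι | x ∈ Z i}.ncard = n)
    (Zk : ℕ → ι → Set α) (htop : Zk n = Z)
    (hrec : ∀ k, 1 ≤ k → k ≤ n → ∀ i,
      Zk (k - 1) i = Zk k i \ {x : α | IsLeast {β : ι | x ∈ Zk k β} i}) :
    (∀ k, 1 ≤ k → k ≤ n → ∀ x : α, {i : ι | x ∈ Zk k i}.ncard = k) ∧
      Pairwise (Function.onFun Disjoint (Zk 1)) ∧ (⋃ i, Zk 1 i) = Set.univ := by
  have key : ∀ d k, k + d = n → 1 ≤ k → ∀ x : α, {i : ι | x ∈ Zk k i}.ncard = k := by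
    intro d
    induction d with
    | zero =>
      intro k hk _ x
      simp only [Nat.add_zero] at hk
      subst hk
      rw [htop]; exact hexact x
    | succ d ih =>
      intro k hk h1 x
      have h := ih (k + 1) (by omega) (by omega) x
      set S : Set ι := {i : ι | x ∈ Zk (k + 1) i} with hS
      have hfin : S.Finite := by
        by_contra hinf
        rw [Set.Infinite.ncard (by simpa using hinf)] at h; omega
      have hne : S.Nonempty := by
        rcases Set.eq_empty_or_nonempty S with he | hne
        · rw [he] at h; simp at h
        · exact hne
      set m : ι := (IsWellFounded.wf (r := ((· < ·) : ι → ι → Prop))).min S hne with hm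
      have hmS : m ∈ S := (IsWellFounded.wf).min_mem S hne
      have hleast : IsLeast S m := by
        refine ⟨hmS, fun b hb => ?_⟩
        exact le_of_not_gt ((IsWellFounded.wf).not_lt_min S hb)
      have heq : {i : ι | x ∈ Zk k i} = S \ {m} := by
        ext i
        have := hrec (k + 1) (by omega) (by omega) i
        simp only [Nat.add_sub_cancel] at this
        simp only [Set.mem_setOf_eq, this, Set.mem_diff, Set.mem_singleton_iff]
        constructor
        · rintro ⟨hi, hni⟩
          refine ⟨hi, fun him => hni ?_⟩
          subst him; exact hleast
        · rintro ⟨hi, hni⟩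
          exact ⟨hi, fun hl => hni (hl.unique hleast)⟩
      rw [heq, Set.ncard_diff_singleton_of_mem hmS, h]
      omega
  have h1 : ∀ x : α, {i : ι | x ∈ Zk 1 i}.ncard = 1 := key (n - 1) 1 (by omega) le_rfl
  refine ⟨fun k hk1 hkn => key (n - k) k (by omega) hk1, ?_, ?_⟩
  · intro i j hij
    rw [Function.onFun, Set.disjoint_left]
    intro x hxi hxj
    obtain ⟨a, ha⟩ := Set.ncard_eq_one.mp (h1 x)
    have hi : i ∈ ({a} : Set ι) := ha ▸ hxi
    have hj : j ∈ ({a} : Set ι) := ha ▸ hxj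
    exact hij (hi.trans hj.symm)
  · ext x
    simp only [Set.mem_iUnion, Set.mem_univ, iff_true]
    obtain ⟨a, ha⟩ := Set.ncard_eq_one.mp (h1 x)
    exact ⟨a, by have : a ∈ ({a} : Set ι) := rfl; rwa [← ha] at this⟩
end
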